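/- Let s₁ < ... < s_g be the lengths of all maximal palindromes of T ending at position i, with d_j = s_j − s_{j−1}. For any 1 < j < g, if d_{j+1} ≠ d_j then d_{j+1} ≥ d_j + d_{j−1}. -/

import Mathlib

/-!
Let `a < b < c` be consecutive maximal lengths, `p = b - a` and `q = c - b`. Reflecting the
palindromic suffix of length `b` inside the one of length `c` gives a palindromic suffix of
length `2b - c`, and the period `q` of the longer palindrome carries any outward extension of
it to one of `b`; so `2b - c` is again a maximal length as soon as it is positive. If `q ≠ p`
and `q < p + d (j - 1)`, it would lie strictly between two consecutive maximal lengths: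
between `a` and `b` if `q < p`, between the predecessor of `a` and `a` if `q > p`.
-/

/-- `MaxPalEnd T i s` : the substring of `T` of length `s ≥ 1` ending at
(1-indexed) position `i` is a palindrome that cannot be extended outward. -/
def MaxPalEnd {α : Type*} (T : List α) (i s : ℕ) : Prop :=
  1 ≤ s ∧ s ≤ i ∧ i ≤ T.length ∧
  (((T.take i).drop (i - s)).reverse = (T.take i).drop (i - s)) ∧
  ¬(s < i ∧ i < T.length ∧ T[i - s - 1]? = T[i]?)

def IsPalSuffix {α : Type*} (T : List α) (i s : ℕ) : Prop :=
  ∀ k < s, T[i - 1 - k]? = T[i - s + k]?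

theorem reverse_drop_take_eq_iff_isPalSuffix {α : Type*} {T : List α} {i s : ℕ}
    (hs : s ≤ i) (hi : i ≤ T.length) :
    ((T.take i).drop (i - s)).reverse = (T.take i).drop (i - s) ↔ IsPalSuffix T i s := by
  set l := (T.take i).drop (i - s)
  have hlen : l.length = s := by simp only [l, List.length_drop, List.length_take]; omega
  have hget : ∀ k < s, l[k]? = T[i - s + k]? := fun k hk => by
    simp only [l, List.getElem?_drop]
    exact List.getElem?_take_of_lt (by omega)
  have hrev : ∀ k < s, l.reverse[k]? = T[i - 1 - k]? := fun k hk => by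
    rw [List.getElem?_reverse (by omega), hlen, hget _ (by omega)]
    congr 1
    omega
  constructor
  · intro h k hk
    rw [← hrev k hk, h, hget k hk]
  · intro h
    refine List.ext_getElem?' fun k hk => ?_
    simp only [List.length_reverse, max_self, hlen] at hk
    rw [hrev k hk, hget k hk, h k hk]

namespace IsPalSuffix

variable {α : Type*} {T : List α} {i a b c : ℕ}

theorem period (ha : IsPalSuffix T i a) (hb : IsPalSuffix T i b) (hab : a ≤ b) (hbi : b ≤ i) :
    ∀ k < a, T[i - 1 - k]? = T[i - 1 - (k + (b - a))]? := fun k hk => by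
  rw [ha k hk, hb _ (by omega)]
  congr 1
  omega

theorem two_mul_sub (hb : IsPalSuffix T i b) (hc : IsPalSuffix T i c) (hbc : b ≤ c)
    (hci : c ≤ i) : IsPalSuffix T i (2 * b - c) := fun k hk => by
  rw [hb k (by omega), show i - (2 * b - c) + k = i - 1 - (2 * b - c - 1 - k) by omega,
    hb.period hc hbc hci _ (by omega)]
  congr 1
  omega

end IsPalSuffix

theorem MaxPalEnd.isPalSuffix {α : Type*} {T : List α} {i s : ℕ} (h : MaxPalEnd T i s) :
    IsPalSuffix T i s :=
  (reverse_drop_take_eq_iff_isPalSuffix h.2.1 h.2.2.1).1 h.2.2.2.1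

theorem MaxPalEnd.two_mul_sub {α : Type*} {T : List α} {i b c : ℕ} (hb : MaxPalEnd T i b)
    (hc : IsPalSuffix T i c) (hci : c ≤ i) (hbc : b < c) (hcb : c < 2 * b) :
    MaxPalEnd T i (2 * b - c) := by
  have hpal := hb.isPalSuffix.two_mul_sub hc hbc.le hci
  have hshift := hb.isPalSuffix.period hc hbc.le hci (2 * b - c) (by omega)
  obtain ⟨-, hbi, hiT, -, hb_max⟩ := hb
  refine ⟨by omega, by omega, hiT, (reverse_drop_take_eq_iff_isPalSuffix (by omega) hiT).2 hpal,
    fun ⟨_, hiT', hext⟩ => hb_max ⟨by omega, hiT', ?_⟩⟩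
  rw [show i - 1 - (2 * b - c) = i - (2 * b - c) - 1 by omega,
    show i - 1 - (2 * b - c + (c - b)) = i - b - 1 by omega] at hshift
  rwa [← hshift]

theorem StrictMonoOn.apply_notMem_Ioo_add_one {β : Type*} [Preorder β] {f : ℕ → β} {S : Set ℕ}
    (hf : StrictMonoOn f S) {k m : ℕ} (hk : k ∈ S) (hm : m ∈ S) (hm' : m + 1 ∈ S) :
    f k ∉ Set.Ioo (f m) (f (m + 1)) := fun ⟨h₁, h₂⟩ => by
  have := (hf.lt_iff_lt hm hk).1 h₁
  have := (hf.lt_iff_lt hk hm').1 h₂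
  omega

theorem gap_add_gap_le_of_reflection_closed {g : ℕ} {s d : ℕ → ℕ}
    (hmono : ∀ j, j + 1 < g → s j < s (j + 1))
    (hrefl : ∀ j, j + 1 < g → s (j + 1) < 2 * s j → ∃ k < g, s k = 2 * s j - s (j + 1))
    (hd0 : d 0 = 0) (hd : ∀ j, 1 ≤ j → j < g → d j = s j - s (j - 1)) :
    ∀ j, 1 ≤ j → j + 1 < g → d (j + 1) ≠ d j → d j + d (j - 1) ≤ d (j + 1) := by
  have hsmono : StrictMonoOn s (Set.Iio g) :=
    strictMonoOn_of_lt_add_one Set.ordConnected_Iio fun m _ _ hm => hmono m hm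
  intro j hj hjg hne
  by_contra! hlt
  have hab := hmono (j - 1) (by omega)
  have hbc := hmono j hjg
  rw [Nat.sub_add_cancel hj] at hab
  rw [hd j hj (by omega), hd (j + 1) (by omega) hjg, Nat.add_sub_cancel] at hne hlt
  have reflected_between : ∀ m, m + 1 < g → s m < 2 * s j - s (j + 1) →
      2 * s j - s (j + 1) < s (m + 1) → False := fun m hm h₁ h₂ => by
    obtain ⟨k, hk, hsk⟩ := hrefl j hjg (by omega)
    exact hsmono.apply_notMem_Ioo_add_one hk (Set.mem_Iio.2 (by omega)) hm ⟨hsk ▸ h₁, hsk ▸ h₂⟩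
  rcases Nat.lt_or_gt_of_ne hne with hq | hq
  · exact reflected_between (j - 1) (by omega) (by omega) (by rw [Nat.sub_add_cancel hj]; omega)
  · obtain ⟨j, rfl⟩ : ∃ j', j = j' + 2 := by
      refine ⟨j - 2, (Nat.sub_add_cancel ?_).symm⟩
      by_contra! h
      obtain rfl : j = 1 := by omega
      rw [hd0] at hlt
      omega
    have hprev := hd (j + 1) (by omega) (by omega)
    have hj' := hmono j (by omega)
    rw [show j + 2 - 1 = j + 1 from rfl] at hlt hab hq
    rw [Nat.add_sub_cancel] at hprev
    exact reflected_between j (by omega) (by omega) (by omega)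

/-- With `s 0 < s 1 < ...` the sorted lengths of all maximal palindromes of `T`
ending at position `i`, `d 0 = 0` and `d j = s j - s (j-1)` for `1 ≤ j < g`:
if `d (j+1) ≠ d j` then `d (j+1) ≥ d j + d (j-1)`. -/
theorem maxpal_differences_fibonacci {α : Type*} (T : List α) (i g : ℕ) (s d : ℕ → ℕ)
    (hmono : ∀ j, j + 1 < g → s j < s (j + 1))
    (hset : ∀ x, MaxPalEnd T i x ↔ ∃ j < g, s j = x)
    (hd0 : d 0 = 0)
    (hd : ∀ j, 1 ≤ j → j < g → d j = s j - s (j - 1)) :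
    ∀ j, 1 ≤ j → j + 1 < g → d (j + 1) ≠ d j → d j + d (j - 1) ≤ d (j + 1) := by
  have hmax : ∀ k < g, MaxPalEnd T i (s k) := fun k hk => (hset _).2 ⟨k, hk, rfl⟩
  refine gap_add_gap_le_of_reflection_closed hmono (fun j hj hcb => (hset _).1 ?_) hd0 hd
  have hc := hmax (j + 1) hj
  exact (hmax j (by omega)).two_mul_sub hc.isPalSuffix hc.2.1 (hmono j hj) hcb
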